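/- arXiv:2412.09085 — 2 statements merged into one kernel-verified Lean document; each statement's English description precedes it below -/
import Mathlib

section
/- Let ρ > 1, σ̃² > 0 and P ≥ 0. Define F : ℝ → ℝ by F(x) = 0 for x ≤ σ̃²/ρ, F(x) = ln(x ρ / σ̃²)/(2 ln ρ) for σ̃²/ρ ≤ x ≤ ρ σ̃², and F(x) = 1 for x ≥ ρ σ̃², and define the detection error probability ζ(Γ) = 1 − F(Γ) + F(Γ − P) for Γ ∈ ℝ. Let Γ* = min(P + σ̃²/ρ, ρ σ̃²). Then for every Γ ∈ ℝ one has ζ(Γ) ≥ ζ(Γ*), and ζ(Γ*) = 1 − (1/2)·log_ρ(1 + ρ P / σ̃²) if P ≤ σ̃²(ρ − ρ⁻¹), while ζ(Γ*) = 0 if P > σ̃²(ρ − ρ⁻¹). (Here log_ρ(y) = ln y / ln ρ.) -/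
private lemma aux_dep (ρ σ2 c1 c2 d1 d2 : ℝ) (hρ : 1 < ρ) (hσ : 0 < σ2)
    (hc1 : 0 < c1) (hc2 : 0 < c2) (hd1 : 0 < d1) (hd2 : 0 < d2)
    (h : c1 * d2 ≤ d1 * c2) :
    1 - Real.log (d1 * ρ / σ2) / (2 * Real.log ρ) + Real.log (d2 * ρ / σ2) / (2 * Real.log ρ)
      ≤ 1 - Real.log (c1 * ρ / σ2) / (2 * Real.log ρ)
        + Real.log (c2 * ρ / σ2) / (2 * Real.log ρ) := by
  have hρ0 : 0 < ρ := lt_trans one_pos hρ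
  have hl : 0 < Real.log ρ := Real.log_pos hρ
  have hD : 0 < 2 * Real.log ρ := by positivity
  have hpos : (0:ℝ) ≤ ρ / σ2 * (ρ / σ2) := by positivity
  have h' : (c1 * ρ / σ2) * (d2 * ρ / σ2) ≤ (d1 * ρ / σ2) * (c2 * ρ / σ2) := by
    calc (c1 * ρ / σ2) * (d2 * ρ / σ2) = (c1 * d2) * (ρ / σ2 * (ρ / σ2)) := by ring
      _ ≤ (d1 * c2) * (ρ / σ2 * (ρ / σ2)) := mul_le_mul_of_nonneg_right h hpos
      _ = (d1 * ρ / σ2) * (c2 * ρ / σ2) := by ring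
  have hlog : Real.log ((c1 * ρ / σ2) * (d2 * ρ / σ2))
      ≤ Real.log ((d1 * ρ / σ2) * (c2 * ρ / σ2)) :=
    Real.log_le_log (by positivity) h'
  rw [Real.log_mul (by positivity) (by positivity),
      Real.log_mul (by positivity) (by positivity)] at hlog
  have h2 : (Real.log (c1 * ρ / σ2) + Real.log (d2 * ρ / σ2)) / (2 * Real.log ρ)
      ≤ (Real.log (d1 * ρ / σ2) + Real.log (c2 * ρ / σ2)) / (2 * Real.log ρ) :=
    (div_le_div_iff_of_pos_right hD).mpr hlog
  rw [add_div, add_div] at h2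
  linarith

/-- Willie's optimal radiometer threshold: the threshold Γ* = min(P + σ̃²/ρ, ρσ̃²)
minimizes the detection error probability ζ(Γ) = 1 − F(Γ) + F(Γ − P), and the
minimum DEP is 1 − (1/2) log_ρ(1 + ρP/σ̃²) when P ≤ σ̃²(ρ − ρ⁻¹), and 0 otherwise. -/
theorem stmt_2 (ρ σ2 P : ℝ) (hρ : 1 < ρ) (hσ : 0 < σ2) (hP : 0 ≤ P)
    (F : ℝ → ℝ)
    (hF0 : ∀ x : ℝ, x ≤ σ2 / ρ → F x = 0)
    (hF1 : ∀ x : ℝ, σ2 / ρ ≤ x → x ≤ ρ * σ2 →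
      F x = Real.log (x * ρ / σ2) / (2 * Real.log ρ))
    (hF2 : ∀ x : ℝ, ρ * σ2 ≤ x → F x = 1)
    (ζ : ℝ → ℝ) (hζ : ∀ Γ : ℝ, ζ Γ = 1 - F Γ + F (Γ - P)) :
    (∀ Γ : ℝ, ζ (min (P + σ2 / ρ) (ρ * σ2)) ≤ ζ Γ) ∧
    (P ≤ σ2 * (ρ - ρ⁻¹) →
      ζ (min (P + σ2 / ρ) (ρ * σ2))
        = 1 - (1 / 2) * (Real.log (1 + ρ * P / σ2) / Real.log ρ)) ∧
    (P > σ2 * (ρ - ρ⁻¹) → ζ (min (P + σ2 / ρ) (ρ * σ2)) = 0) := by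
  have hρ0 : 0 < ρ := lt_trans one_pos hρ
  have hl : 0 < Real.log ρ := Real.log_pos hρ
  set a := σ2 / ρ with ha_def
  set b := ρ * σ2 with hb_def
  have ha : 0 < a := div_pos hσ hρ0
  have hab : a < b := by
    rw [ha_def, hb_def, div_lt_iff₀ hρ0]
    nlinarith [mul_pos (mul_pos hσ (sub_pos.mpr hρ)) (show (0:ℝ) < ρ + 1 by linarith)]
  have hba : b - a = σ2 * (ρ - ρ⁻¹) := by
    rw [ha_def, hb_def]
    field_simp
  have haρ : a * ρ / σ2 = 1 := by
    rw [ha_def]; field_simp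
  have hbρ : b * ρ / σ2 = ρ * ρ := by
    rw [hb_def]; field_simp
  -- closed form for F via clamping
  have hFval : ∀ x : ℝ, F x = Real.log (max a (min x b) * ρ / σ2) / (2 * Real.log ρ) := by
    intro x
    rcases le_or_gt x a with h | h
    · rw [hF0 x h, min_eq_left (h.trans hab.le), max_eq_left h, haρ, Real.log_one, zero_div]
    · rcases le_or_gt x b with h2 | h2
      · rw [hF1 x h.le h2, min_eq_left h2, max_eq_right h.le]
      · rw [hF2 x h2.le, min_eq_right h2.le, max_eq_right hab.le, hbρ,
            Real.log_mul hρ0.ne' hρ0.ne']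
        field_simp
        ring
  have hζval : ∀ Γ : ℝ, ζ Γ = 1 - Real.log (max a (min Γ b) * ρ / σ2) / (2 * Real.log ρ)
      + Real.log (max a (min (Γ - P) b) * ρ / σ2) / (2 * Real.log ρ) := by
    intro Γ
    rw [hζ, hFval, hFval]
  have hcl_lb : ∀ x : ℝ, a ≤ max a (min x b) := fun x => le_max_left a _
  have hcl_ub : ∀ x : ℝ, max a (min x b) ≤ b := fun x => max_le hab.le (min_le_right _ _)
  have hcl_pos : ∀ x : ℝ, 0 < max a (min x b) := fun x => lt_of_lt_of_le ha (hcl_lb x)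
  have hclamp_le : ∀ Γ : ℝ, max a (min Γ b) ≤ max a (min (Γ - P) b) + P := by
    intro Γ
    have h1 : min Γ b ≤ min (Γ - P) b + P := by
      rw [← min_add_add_right]
      have hΓ : Γ - P + P = Γ := by ring
      rw [hΓ]
      exact min_le_min le_rfl (by linarith)
    exact max_le (le_trans (le_max_left a _) (le_add_of_nonneg_right hP))
      (h1.trans (add_le_add_left (le_max_right _ _) P))
  refine ⟨?_, ?_, ?_⟩
  · intro Γ
    rcases le_or_gt (P + a) b with hPA | hPB
    · rw [min_eq_left hPA]
      have eΓ : ζ (P + a) = 1 - Real.log ((P + a) * ρ / σ2) / (2 * Real.log ρ)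
          + Real.log (a * ρ / σ2) / (2 * Real.log ρ) := by
        rw [hζval]
        have e2 : P + a - P = a := by ring
        rw [e2, min_eq_left hPA, max_eq_right (by linarith : a ≤ P + a),
            min_eq_left hab.le, max_self]
      rw [eΓ, hζval Γ]
      apply aux_dep ρ σ2 _ _ _ _ hρ hσ (hcl_pos Γ) (hcl_pos (Γ - P)) (by linarith) ha
      nlinarith [mul_le_mul_of_nonneg_right (hclamp_le Γ) ha.le,
        mul_nonneg hP (sub_nonneg.mpr (hcl_lb (Γ - P)))]
    · rw [min_eq_right hPB.le]
      have eΓ : ζ b = 1 - Real.log (b * ρ / σ2) / (2 * Real.log ρ)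
          + Real.log (a * ρ / σ2) / (2 * Real.log ρ) := by
        rw [hζval]
        have h1 : min b b = b := min_self b
        have h2 : min (b - P) b = b - P := min_eq_left (by linarith)
        have h3 : max a (b - P) = a := max_eq_left (by linarith)
        rw [h1, max_eq_right hab.le, h2, h3]
      rw [eΓ, hζval Γ]
      apply aux_dep ρ σ2 _ _ _ _ hρ hσ (hcl_pos Γ) (hcl_pos (Γ - P)) (by linarith) ha
      exact mul_le_mul (hcl_ub Γ) (hcl_lb (Γ - P)) ha.le (by linarith)
  · intro hPle
    have hPA : P + a ≤ b := by linarith [hba]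
    rw [min_eq_left hPA, hζval]
    have e2 : P + a - P = a := by ring
    rw [e2, min_eq_left hPA, max_eq_right (by linarith : a ≤ P + a),
        min_eq_left hab.le, max_self, haρ, Real.log_one, zero_div]
    have harg : (P + a) * ρ / σ2 = 1 + ρ * P / σ2 := by
      rw [ha_def]; field_simp; ring
    rw [harg]
    field_simp
    ring
  · intro hPgt
    have hPB : b ≤ P + a := by linarith [hba]
    rw [min_eq_right hPB, hζval]
    have h2 : min (b - P) b = b - P := min_eq_left (by linarith)
    have h3 : max a (b - P) = a := max_eq_left (by linarith)
    rw [min_self, max_eq_right hab.le, h2, h3, haρ, Real.log_one, zero_div, hbρ,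
        Real.log_mul hρ0.ne' hρ0.ne']
    field_simp [hl.ne']
    ring
end

section
/- Let n ∈ ℕ, let X be a type, let u : X → ℂⁿ and w : X → ℝ with w x > 0 for all x, and define the ratio r(x) = ‖u(x)‖²/w(x) and, for λ ∈ ℂⁿ, G(λ, x) = 2·Re(∑ᵢ λᵢ u(x)ᵢ) − w(x)·‖λ‖². Fix x₀, x₁ ∈ X and let λ' ∈ ℂⁿ be given by λ'ᵢ = conj(u(x₀)ᵢ)/w(x₀). If G(λ', x₁) ≥ G(λ', x₀), then r(x₁) ≥ r(x₀). -/
private lemma norm_sq_eucl {n : ℕ} (x : EuclideanSpace ℂ (Fin n)) :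
    ‖x‖ ^ 2 = ∑ i, ‖x i‖ ^ 2 := by
  rw [EuclideanSpace.norm_eq, Real.sq_sqrt]
  exact Finset.sum_nonneg fun i _ => sq_nonneg _

private lemma key_ineq {n : ℕ} (v l : Fin n → ℂ) (c : ℝ) (hc : 0 < c) :
    2 * (∑ i, l i * v i).re - c * ∑ i, ‖l i‖ ^ 2 ≤ (∑ i, ‖v i‖ ^ 2) / c := by
  have hexp : ∀ i : Fin n, Complex.normSq ((starRingEnd ℂ) (v i) - (c:ℂ) * l i)
      = ‖v i‖ ^ 2 - 2 * c * (l i * v i).re + c ^ 2 * ‖l i‖ ^ 2 := by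
    intro i
    simp only [Complex.sq_norm, Complex.normSq_apply, Complex.sub_re,
      Complex.sub_im, Complex.mul_re, Complex.mul_im, RingHomCompTriple.comp_apply,
      Complex.conj_re, Complex.conj_im, Complex.ofReal_re, Complex.ofReal_im]
    ring
  have h0 : (0:ℝ) ≤ ∑ i, Complex.normSq ((starRingEnd ℂ) (v i) - (c:ℂ) * l i) :=
    Finset.sum_nonneg fun i _ => Complex.normSq_nonneg _
  have hsum : ∑ i, Complex.normSq ((starRingEnd ℂ) (v i) - (c:ℂ) * l i)
      = ∑ i, ‖v i‖ ^ 2 - 2 * c * (∑ i, l i * v i).re + c ^ 2 * ∑ i, ‖l i‖ ^ 2 := by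
    rw [Complex.re_sum, Finset.mul_sum, Finset.mul_sum, ← Finset.sum_sub_distrib,
      ← Finset.sum_add_distrib]
    exact Finset.sum_congr rfl fun i _ => hexp i
  rw [hsum] at h0
  rw [le_div_iff₀ hc]
  nlinarith [h0]

/-- Monotonicity of the alternating optimization: if the quadratic-transform
auxiliary objective G(λ', ·), with λ' the optimal auxiliary variable at x₀,
does not decrease from x₀ to x₁, then the ratio ‖u‖²/w does not decrease. -/
theorem stmt_10 (n : ℕ) {X : Type*} (u : X → EuclideanSpace ℂ (Fin n))
    (w : X → ℝ) (hw : ∀ x, 0 < w x)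
    (G : EuclideanSpace ℂ (Fin n) → X → ℝ)
    (hG : ∀ l x, G l x = 2 * (∑ i, l i * u x i).re - w x * ‖l‖ ^ 2)
    (x₀ x₁ : X) (l' : EuclideanSpace ℂ (Fin n))
    (hl' : ∀ i, l' i = (starRingEnd ℂ) (u x₀ i) / (w x₀ : ℂ))
    (h : G l' x₀ ≤ G l' x₁) :
    ‖u x₀‖ ^ 2 / w x₀ ≤ ‖u x₁‖ ^ 2 / w x₁ := by
  have hw0 := hw x₀
  have hw1 := hw x₁
  -- Step 1: G l' x₀ = ‖u x₀‖² / w x₀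
  have hterm : ∀ i, l' i * u x₀ i = ((‖u x₀ i‖ ^ 2 / w x₀ : ℝ) : ℂ) := by
    intro i
    rw [hl' i]
    rw [div_mul_eq_mul_div, mul_comm, Complex.mul_conj, Complex.normSq_eq_norm_sq]
    push_cast
    ring
  have hre : (∑ i, l' i * u x₀ i).re = (∑ i, ‖u x₀ i‖ ^ 2) / w x₀ := by
    rw [Complex.re_sum]
    rw [Finset.sum_div]
    refine Finset.sum_congr rfl fun i _ => ?_
    rw [hterm i, Complex.ofReal_re]
  have hnl : ‖l'‖ ^ 2 = (∑ i, ‖u x₀ i‖ ^ 2) / w x₀ ^ 2 := by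
    rw [norm_sq_eucl, Finset.sum_div]
    refine Finset.sum_congr rfl fun i _ => ?_
    rw [hl' i, norm_div, div_pow]
    simp [Complex.norm_conj, Complex.norm_real, abs_of_pos hw0]
  have hG0 : G l' x₀ = ‖u x₀‖ ^ 2 / w x₀ := by
    rw [hG, hre, hnl, norm_sq_eucl]
    field_simp
    ring
  -- Step 2: G l' x₁ ≤ ‖u x₁‖² / w x₁
  have hG1 : G l' x₁ ≤ ‖u x₁‖ ^ 2 / w x₁ := by
    rw [hG, norm_sq_eucl (u x₁), norm_sq_eucl l']
    exact key_ineq (fun i => u x₁ i) (fun i => l' i) (w x₁) hw1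
  calc ‖u x₀‖ ^ 2 / w x₀ = G l' x₀ := hG0.symm
    _ ≤ G l' x₁ := h
    _ ≤ ‖u x₁‖ ^ 2 / w x₁ := hG1
end
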